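/- arXiv:1001.5272 — 8 statements merged into one kernel-verified Lean document; each statement's English description precedes it below -/
import Mathlib

section
/- Let k ≥ ℓ ≥ 0 be integers, let L = 2^ℓ, and let q, i be integers with L dividing q, 0 ≤ i < L, and 0 ≤ q + i < 2^k. Then rev_k(q + i) = rev_k(q) + rev_k(i). -/
/-!
Adding `i < 2^ℓ` to a multiple `q` of `2^ℓ` produces no carries: the binary digits of `q` and `i`
occupy disjoint positions, so every digit of `q + i` is the sum of the corresponding digits of
`q` and `i`. Since `rev k` is a linear combination of digits, it is additive on such pairs.
-/

/-- The length-`k` bit-reversal of `s`: if `s = Σ_{i<k} b_i 2^i` with `b_i ∈ {0,1}`,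
then `rev k s = Σ_{i<k} b_i 2^(k-1-i)`. -/
def rev (k s : ℕ) : ℕ := ∑ i ∈ Finset.range k, (s / 2 ^ i % 2) * 2 ^ (k - 1 - i)

namespace Nat

theorem add_div_pow_mod_of_dvd_of_lt {b ℓ q i : ℕ} (hb : 0 < b) (hq : b ^ ℓ ∣ q) (hi : i < b ^ ℓ)
    (j : ℕ) : (q + i) / b ^ j % b = q / b ^ j % b + i / b ^ j % b := by
  rcases lt_or_ge j ℓ with hjℓ | hℓj
  · have hqj : b ^ j ∣ q := (pow_dvd_pow b hjℓ.le).trans hq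
    obtain ⟨c, hc⟩ : b ∣ q / b ^ j :=
      dvd_div_of_mul_dvd ((pow_succ b j ▸ pow_dvd_pow b hjℓ).trans hq)
    rw [Nat.add_div_of_dvd_right hqj, hc, mul_mod_right, mul_add_mod, zero_add]
  · obtain ⟨d, rfl⟩ := Nat.exists_eq_add_of_le hℓj
    have hiℓ : i / b ^ ℓ = 0 := div_eq_of_lt hi
    have hij : i / b ^ (ℓ + d) = 0 :=
      div_eq_of_lt (hi.trans_le (Nat.pow_le_pow_right hb (le_add_right ℓ d)))
    rw [hij, pow_add, ← Nat.div_div_eq_div_mul, ← Nat.div_div_eq_div_mul,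
      Nat.add_div_of_dvd_right hq, hiℓ, add_zero, zero_mod, add_zero]

end Nat

theorem rev_add_of_digit_add {k s t : ℕ}
    (h : ∀ j < k, (s + t) / 2 ^ j % 2 = s / 2 ^ j % 2 + t / 2 ^ j % 2) :
    rev k (s + t) = rev k s + rev k t := by
  rw [rev, rev, rev, ← Finset.sum_add_distrib]
  refine Finset.sum_congr rfl fun j hj => ?_
  rw [h j (Finset.mem_range.mp hj), add_mul]

theorem stmt3_general (k ℓ : ℕ) (q i : ℕ)
    (hq : 2 ^ ℓ ∣ q) (hi : i < 2 ^ ℓ) :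
    rev k (q + i) = rev k q + rev k i :=
  rev_add_of_digit_add fun j _ => Nat.add_div_pow_mod_of_dvd_of_lt two_pos hq hi j

theorem stmt3 (k ℓ : ℕ) (hℓk : ℓ ≤ k) (q i : ℕ)
    (hq : 2 ^ ℓ ∣ q) (hi : i < 2 ^ ℓ) (hqi : q + i < 2 ^ k) :
    rev k (q + i) = rev k q + rev k i :=
  stmt3_general k ℓ q i hq hi
end

section
/- Assume additionally that 2 is invertible in R. Let F, G, H ∈ R[x] satisfy F(x) = G(x^2) + x·H(x^2). Then ω is a unit in R, and for every integer s with 0 ≤ 2s + 1 < 2^k, writing ω'_s = (ω^2)^{rev_{k−1}(s)}, one has the inverse butterfly relations G(ω'_s) = (F(ω_{2s}) + F(ω_{2s+1}))/2 and H(ω'_s) = ω_{2s}^{−1}·(F(ω_{2s}) − F(ω_{2s+1}))/2. -/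
open Polynomial

lemma rev_succ_two_mul_add (n s b : ℕ) (hb : b < 2) :
    rev (n + 1) (2 * s + b) = rev n s + b * 2 ^ n := by
  unfold rev
  rw [Finset.sum_range_succ']
  congr 1
  · refine Finset.sum_congr rfl fun i _ => ?_
    have hdiv : (2 * s + b) / 2 ^ (i + 1) = s / 2 ^ i := by
      rw [pow_succ', ← Nat.div_div_eq_div_mul, Nat.mul_add_div two_pos, Nat.div_eq_of_lt hb,
        add_zero]
    rw [hdiv, Nat.add_sub_cancel, Nat.sub_sub, Nat.add_comm 1]
  · simp [Nat.mod_eq_of_lt hb]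

lemma rev_succ_two_mul (n s : ℕ) : rev (n + 1) (2 * s) = rev n s := by
  simpa using rev_succ_two_mul_add n s 0 two_pos

lemma rev_succ_two_mul_add_one (n s : ℕ) : rev (n + 1) (2 * s + 1) = rev n s + 2 ^ n := by
  simpa using rev_succ_two_mul_add n s 1 one_lt_two

lemma pow_rev_succ_two_mul_add_one {M : Type*} [Monoid M] [HasDistribNeg M] {n : ℕ} {ω : M}
    (hω : ω ^ 2 ^ n = -1) (s : ℕ) : ω ^ rev (n + 1) (2 * s + 1) = -ω ^ rev n s := by
  rw [rev_succ_two_mul_add_one, pow_add, hω, mul_neg_one]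

lemma isUnit_of_pow_eq_neg_one {M : Type*} [Monoid M] [HasDistribNeg M] {m : ℕ} {ω : M}
    (hω : ω ^ m = -1) (hm : m ≠ 0) : IsUnit ω :=
  IsUnit.of_pow_eq_one (n := 2 * m) (by rw [pow_mul', hω, neg_one_sq]) (by omega)

section EvenOddSplit

variable {R : Type*} [CommRing R] {F G H : R[X]}

lemma eval_of_eq_comp_sq_add_X_mul (hF : F = G.comp (X ^ 2) + X * H.comp (X ^ 2)) (x : R) :
    F.eval x = G.eval (x ^ 2) + x * H.eval (x ^ 2) := by
  simp [hF, eval_comp]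

lemma eval_sq_eq_of_eq_comp_sq_add_X_mul [Invertible (2 : R)]
    (hF : F = G.comp (X ^ 2) + X * H.comp (X ^ 2)) (u : R) :
    G.eval (u ^ 2) = (F.eval u + F.eval (-u)) * ⅟(2 : R) := by
  rw [eval_of_eq_comp_sq_add_X_mul hF, eval_of_eq_comp_sq_add_X_mul hF, neg_sq]
  calc G.eval (u ^ 2) = G.eval (u ^ 2) * 2 * ⅟(2 : R) := by rw [mul_assoc, mul_invOf_self, mul_one]
    _ = _ := by ring

lemma eval_sq_eq_inverse_mul_of_eq_comp_sq_add_X_mul [Invertible (2 : R)]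
    (hF : F = G.comp (X ^ 2) + X * H.comp (X ^ 2)) {u : R} (hu : IsUnit u) :
    H.eval (u ^ 2) = Ring.inverse u * ((F.eval u - F.eval (-u)) * ⅟(2 : R)) := by
  rw [eval_of_eq_comp_sq_add_X_mul hF, eval_of_eq_comp_sq_add_X_mul hF, neg_sq]
  calc H.eval (u ^ 2) = Ring.inverse u * (u * H.eval (u ^ 2) * 2 * ⅟(2 : R)) := by
        rw [mul_assoc _ 2, mul_invOf_self, mul_one, Ring.inverse_mul_cancel_left _ _ hu]
    _ = _ := by ring

end EvenOddSplit

theorem stmt6_general {R : Type*} [CommRing R] [Invertible (2 : R)] (k : ℕ) (hk : 1 ≤ k) (ω : R)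
    (hω : ω ^ 2 ^ (k - 1) = -1) (F G H : Polynomial R)
    (hF : F = G.comp (Polynomial.X ^ 2) + Polynomial.X * H.comp (Polynomial.X ^ 2))
    (s : ℕ) :
    IsUnit ω ∧
    G.eval ((ω ^ 2) ^ rev (k - 1) s) =
      (F.eval (ω ^ rev k (2 * s)) + F.eval (ω ^ rev k (2 * s + 1))) * ⅟(2 : R) ∧
    H.eval ((ω ^ 2) ^ rev (k - 1) s) =
      Ring.inverse (ω ^ rev k (2 * s)) *
        ((F.eval (ω ^ rev k (2 * s)) - F.eval (ω ^ rev k (2 * s + 1))) * ⅟(2 : R)) := by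
  obtain ⟨n, rfl⟩ : ∃ n, k = n + 1 := ⟨k - 1, by omega⟩
  rw [Nat.add_sub_cancel] at hω ⊢
  have hunit : IsUnit ω := isUnit_of_pow_eq_neg_one hω (pow_ne_zero _ two_ne_zero)
  rw [rev_succ_two_mul, pow_rev_succ_two_mul_add_one hω, ← pow_mul, mul_comm, pow_mul]
  exact ⟨hunit, eval_sq_eq_of_eq_comp_sq_add_X_mul hF _,
    eval_sq_eq_inverse_mul_of_eq_comp_sq_add_X_mul hF (hunit.pow _)⟩

theorem stmt6 {R : Type*} [CommRing R] [Invertible (2 : R)] (k : ℕ) (hk : 1 ≤ k) (ω : R)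
    (hω : ω ^ 2 ^ (k - 1) = -1) (F G H : Polynomial R)
    (hF : F = G.comp (Polynomial.X ^ 2) + Polynomial.X * H.comp (Polynomial.X ^ 2))
    (s : ℕ) (hs : 2 * s + 1 < 2 ^ k) :
    IsUnit ω ∧
    G.eval ((ω ^ 2) ^ rev (k - 1) s) =
      (F.eval (ω ^ rev k (2 * s)) + F.eval (ω ^ rev k (2 * s + 1))) * ⅟(2 : R) ∧
    H.eval ((ω ^ 2) ^ rev (k - 1) s) =
      Ring.inverse (ω ^ rev k (2 * s)) *
        ((F.eval (ω ^ rev k (2 * s)) - F.eval (ω ^ rev k (2 * s + 1))) * ⅟(2 : R)) :=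
  stmt6_general k hk ω hω F G H hF s
end

section
/- Let ℓ be an integer with 0 ≤ ℓ ≤ k and set L = 2^ℓ. For all integers q, i with L dividing q, 0 ≤ i < L, and 0 ≤ q + i < 2^k, one has ω_q · ω_i = ω_{q+i}. -/
theorem Nat.add_div_eq_div_of_dvd_of_lt {n q i : ℕ} (hq : n ∣ q) (hi : i < n) :
    (q + i) / n = q / n := by
  rw [Nat.add_div_of_dvd_right hq, Nat.div_eq_of_lt hi, add_zero]

theorem Nat.digit_add_of_dvd_of_lt {b ℓ q i : ℕ} (hb : 0 < b) (hq : b ^ ℓ ∣ q) (hi : i < b ^ ℓ)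
    (j : ℕ) : (q + i) / b ^ j % b = q / b ^ j % b + i / b ^ j % b := by
  rcases lt_or_ge j ℓ with hj | hj
  · have hdvd : b ^ j * b ∣ q := (Nat.pow_succ b j ▸ Nat.pow_dvd_pow b hj).trans hq
    obtain ⟨c, hc⟩ := (Nat.dvd_div_iff_mul_dvd (dvd_of_mul_right_dvd hdvd)).2 hdvd
    rw [Nat.add_div_of_dvd_right (dvd_of_mul_right_dvd hdvd), hc, Nat.mul_add_mod,
      Nat.mul_mod_right, zero_add]
  · have hi' : i / b ^ j = 0 := Nat.div_eq_of_lt (hi.trans_le (Nat.pow_le_pow_right hb hj))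
    have hsplit : b ^ j = b ^ ℓ * b ^ (j - ℓ) := by rw [← pow_add, Nat.add_sub_cancel' hj]
    rw [hi', Nat.zero_mod, add_zero, hsplit, ← Nat.div_div_eq_div_mul, ← Nat.div_div_eq_div_mul,
      Nat.add_div_eq_div_of_dvd_of_lt hq hi]

theorem rev_add_of_dvd_of_lt {k ℓ q i : ℕ} (hq : 2 ^ ℓ ∣ q) (hi : i < 2 ^ ℓ) :
    rev k (q + i) = rev k q + rev k i := by
  simp only [rev, ← Finset.sum_add_distrib, ← add_mul,
    Nat.digit_add_of_dvd_of_lt two_pos hq hi]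

theorem stmt9_general {R : Type*} [CommRing R] (k : ℕ) (ω : R) (ℓ : ℕ) (q i : ℕ)
    (hq : 2 ^ ℓ ∣ q) (hi : i < 2 ^ ℓ) :
    ω ^ rev k q * ω ^ rev k i = ω ^ rev k (q + i) := by
  rw [← pow_add, rev_add_of_dvd_of_lt hq hi]

theorem stmt9 {R : Type*} [CommRing R] (k : ℕ) (hk : 1 ≤ k) (ω : R)
    (hω : ω ^ 2 ^ (k - 1) = -1) (ℓ : ℕ) (hℓ : ℓ ≤ k) (q i : ℕ)
    (hq : 2 ^ ℓ ∣ q) (hi : i < 2 ^ ℓ) (hqi : q + i < 2 ^ k) :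
    ω ^ rev k q * ω ^ rev k i = ω ^ rev k (q + i) :=
  stmt9_general k ω ℓ q i hq hi
end

section
/- Assume additionally that 2 is invertible in R. Then for every integer n with 1 ≤ n ≤ 2^k, the R-linear map sending a polynomial F ∈ R[x] with deg F < n to the vector (F(ω_0), F(ω_1), …, F(ω_{n−1})) ∈ R^n is bijective. (This is the mathematical content of the invertibility of the truncated Fourier transform of length n.) -/
open Polynomial

lemma rev_succ (k s : ℕ) : rev (k + 1) s = 2 ^ k * (s % 2) + rev k (s / 2) := by
  rw [rev, Finset.sum_range_succ', add_comm]
  simp only [pow_zero, Nat.div_one, Nat.add_sub_cancel, mul_comm]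
  congr 1
  refine Finset.sum_congr rfl fun i hi => ?_
  rw [Finset.mem_range] at hi
  rw [Nat.div_div_eq_div_mul, ← pow_succ', Nat.sub_sub, add_comm 1 i]

lemma rev_lt (k s : ℕ) : rev k s < 2 ^ k := by
  induction k generalizing s with
  | zero => simp [rev]
  | succ k ih =>
    have hrev := ih (s / 2)
    have hbit : s % 2 ≤ 1 := Nat.le_of_lt_succ (Nat.mod_lt s two_pos)
    rw [rev_succ]
    calc 2 ^ k * (s % 2) + rev k (s / 2) ≤ 2 ^ k * 1 + rev k (s / 2) := by gcongr
      _ < 2 ^ (k + 1) := by rw [pow_succ]; omega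

lemma rev_injOn (k : ℕ) : Set.InjOn (rev k) (Set.Iio (2 ^ k)) := by
  induction k with
  | zero => intro s hs t ht _; simp_all
  | succ k ih =>
    intro s hs t ht h
    simp only [Set.mem_Iio, pow_succ] at hs ht
    rw [rev_succ, rev_succ] at h
    have hs' := rev_lt k (s / 2)
    have ht' := rev_lt k (t / 2)
    have hmod : s % 2 = t % 2 := by
      rcases Nat.mod_two_eq_zero_or_one s with h₁ | h₁ <;>
        rcases Nat.mod_two_eq_zero_or_one t with h₂ | h₂ <;> simp only [h₁, h₂] at h ⊢ <;> omega
    rw [hmod, Nat.add_left_cancel_iff] at h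
    have hdiv := ih (by simp only [Set.mem_Iio]; omega) (by simp only [Set.mem_Iio]; omega) h
    omega

section TwoInvertible

variable {R : Type*} [CommRing R] [Invertible (2 : R)]

lemma isUnit_sub_one_of_pow_eq_neg_one {ζ : R} {N : ℕ} (h : ζ ^ N = -1) : IsUnit (ζ - 1) := by
  refine isUnit_of_dvd_unit (y := -2) ?_ (isUnit_of_invertible (2 : R)).neg
  simpa [h, one_pow, show (-1 : R) - 1 = -2 by ring] using sub_dvd_pow_sub_pow ζ 1 N

lemma isUnit_pow_sub_one {ω : R} {k : ℕ} (hω : ω ^ 2 ^ (k - 1) = -1) {d : ℕ} (hd₀ : d ≠ 0)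
    (hd : d < 2 ^ k) : IsUnit (ω ^ d - 1) := by
  obtain ⟨e, m, hm, rfl⟩ := Nat.exists_eq_two_pow_mul_odd hd₀
  have he : e < k := (Nat.pow_lt_pow_iff_right one_lt_two).mp
    ((Nat.le_mul_of_pos_right _ hm.pos).trans_lt hd)
  refine isUnit_sub_one_of_pow_eq_neg_one (N := 2 ^ (k - 1 - e)) ?_
  rw [← pow_mul, mul_right_comm, ← pow_add, Nat.add_sub_cancel' (by omega), pow_mul, hω,
    hm.neg_one_pow]

lemma isUnit_pow_sub_pow {ω : R} {k : ℕ} (hω : ω ^ 2 ^ (k - 1) = -1) {a b : ℕ} (hab : b < a)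
    (ha : a < 2 ^ k) : IsUnit (ω ^ a - ω ^ b) := by
  have hωu : IsUnit ω := (isUnit_pow_iff (pow_ne_zero _ two_ne_zero)).mp (hω ▸ isUnit_one.neg)
  rw [← Nat.add_sub_cancel' hab.le, pow_add, ← mul_sub_one]
  exact (hωu.pow b).mul (isUnit_pow_sub_one hω (by omega) (by omega))

end TwoInvertible

lemma eval_degreeLT_eq_vandermonde_mulVec {R : Type*} [CommRing R] {n : ℕ} (x : Fin n → R)
    (F : degreeLT R n) :
    (fun i => (F : R[X]).eval (x i)) = (Matrix.vandermonde x).mulVec (degreeLTEquiv R n F) := by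
  funext i
  simp only [Matrix.mulVec, dotProduct, Matrix.vandermonde_apply,
    eval_eq_sum_degreeLTEquiv F.2, mul_comm]

lemma bijective_eval_degreeLT_of_pairwise_isUnit_sub {R : Type*} [CommRing R] {n : ℕ}
    (x : Fin n → R) (hx : Pairwise fun i j => IsUnit (x i - x j)) :
    Function.Bijective fun F : degreeLT R n => fun i => (F : R[X]).eval (x i) := by
  have hV : IsUnit (Matrix.vandermonde x) := by
    rw [Matrix.isUnit_iff_isUnit_det, Matrix.det_vandermonde]
    exact IsUnit.prod_univ_iff.mpr fun i => IsUnit.prod_iff.mpr fun j hj =>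
      hx (Finset.mem_Ioi.mp hj).ne'
  rw [show (fun F : degreeLT R n => fun i => (F : R[X]).eval (x i)) =
      (Matrix.vandermonde x).mulVec ∘ degreeLTEquiv R n from
    funext (eval_degreeLT_eq_vandermonde_mulVec x)]
  exact Function.Bijective.comp
    ⟨Matrix.mulVec_injective_of_isUnit hV, Matrix.mulVec_surjective_iff_isUnit.mpr hV⟩
    (degreeLTEquiv R n).bijective

theorem stmt11_general {R : Type*} [CommRing R] [Invertible (2 : R)] (k : ℕ) (ω : R)
    (hω : ω ^ 2 ^ (k - 1) = -1) (n : ℕ) (hn2 : n ≤ 2 ^ k) :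
    Function.Bijective
      (fun F : Polynomial.degreeLT R n =>
        fun i : Fin n => Polynomial.eval (ω ^ rev k (i : ℕ)) (F : Polynomial R)) := by
  refine bijective_eval_degreeLT_of_pairwise_isUnit_sub _ fun i j hij => ?_
  have hrev : rev k i ≠ rev k j := fun h => hij (Fin.ext (rev_injOn k
    (Set.mem_Iio.mpr (i.2.trans_le hn2)) (Set.mem_Iio.mpr (j.2.trans_le hn2)) h))
  rcases hrev.lt_or_gt with h | h
  · simpa using (isUnit_pow_sub_pow hω h (rev_lt k j)).neg
  · exact isUnit_pow_sub_pow hω h (rev_lt k i)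

theorem stmt11 {R : Type*} [CommRing R] [Invertible (2 : R)] (k : ℕ) (hk : 1 ≤ k) (ω : R)
    (hω : ω ^ 2 ^ (k - 1) = -1) (n : ℕ) (hn1 : 1 ≤ n) (hn2 : n ≤ 2 ^ k) :
    Function.Bijective
      (fun F : Polynomial.degreeLT R n =>
        fun i : Fin n => Polynomial.eval (ω ^ rev k (i : ℕ)) (F : Polynomial R)) :=
  stmt11_general k ω hω n hn2
end

section
/- Let r ≥ 2 be an integer and define the greedy sequence q_0 = 0 and, as long as q_i < r − 1, L_i = 2^{⌊lg(r−q_i)⌋ − 1} and q_{i+1} = q_i + L_i. Then the sequence (L_i) is non-increasing (L_{i+1} ≤ L_i whenever both are defined), and for every i, L_i divides q_i. -/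
/-- The block length used by the greedy sequence at position `q`: `L = 2^(⌊lg (r-q)⌋ - 1)`. -/
def greedyL (r q : ℕ) : ℕ := 2 ^ (Nat.log 2 (r - q) - 1)

/-- The greedy sequence: `q 0 = 0`, and while `q i < r - 1`,
`q (i+1) = q i + greedyL r (q i)`; afterwards it is constant. -/
def greedyQ (r : ℕ) : ℕ → ℕ
  | 0 => 0
  | i + 1 =>
      if greedyQ r i < r - 1 then greedyQ r i + greedyL r (greedyQ r i) else greedyQ r i

lemma greedyQ_le_succ (r i : ℕ) : greedyQ r i ≤ greedyQ r (i + 1) := by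
  simp only [greedyQ]
  split <;> omega

lemma greedyL_exp_anti (r q q' : ℕ) (h : q ≤ q') :
    Nat.log 2 (r - q') - 1 ≤ Nat.log 2 (r - q) - 1 :=
  Nat.sub_le_sub_right (Nat.log_mono_right (Nat.sub_le_sub_left h r)) 1

lemma greedyL_anti (r q q' : ℕ) (h : q ≤ q') : greedyL r q' ≤ greedyL r q :=
  Nat.pow_le_pow_right (by norm_num) (greedyL_exp_anti r q q' h)

lemma greedyL_dvd (r q q' : ℕ) (h : q ≤ q') : greedyL r q' ∣ greedyL r q :=
  pow_dvd_pow 2 (greedyL_exp_anti r q q' h)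

theorem stmt13 (r : ℕ) (hr : 2 ≤ r) :
    (∀ i, greedyQ r (i + 1) < r - 1 →
      greedyL r (greedyQ r (i + 1)) ≤ greedyL r (greedyQ r i)) ∧
    (∀ i, greedyQ r i < r - 1 → greedyL r (greedyQ r i) ∣ greedyQ r i) := by
  constructor
  · intro i _
    exact greedyL_anti r _ _ (greedyQ_le_succ r i)
  · intro i
    induction i with
    | zero => intro _; simp [greedyQ]
    | succ n ih =>
      intro h
      have hn : greedyQ r n < r - 1 := by
        by_contra hc
        simp only [greedyQ, if_neg hc] at h
        omega
      have hq : greedyQ r (n + 1) = greedyQ r n + greedyL r (greedyQ r n) := by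
        simp [greedyQ, if_pos hn]
      have hd : greedyL r (greedyQ r (n + 1)) ∣ greedyL r (greedyQ r n) :=
        greedyL_dvd r _ _ (greedyQ_le_succ r n)
      conv_rhs => rw [hq]
      exact dvd_add (hd.trans (ih hn)) hd
end

section
/- Let r ≥ 2 be an integer and consider the greedy sequence q_0 = 0, L_i = 2^{⌊lg(r−q_i)⌋ − 1}, q_{i+1} = q_i + L_i (defined while q_i < r − 1). If L_{i+1} = L_i (both defined), then either q_{i+2} ≥ r − 1 or L_{i+2} < L_{i+1}; that is, each power of two occurs at most twice among the values L_0, L_1, L_2, …. -/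
/-
Write `n = r - q_i` and `e = ⌊lg n⌋`, so `L_i = 2^(e-1)`. If `L_{i+1} = L_i`, the two steps together
advance by `2^e`, leaving `n - 2^e < 2^e` to go. Unless that rest is at most `1` (and the sequence has
stopped), its logarithm lies in `[1, e)`, so `L_{i+2} < 2^(e-1)`.
-/

lemma greedyQ_succ_of_lt {r i : ℕ} (h : greedyQ r i < r - 1) :
    greedyQ r (i + 1) = greedyQ r i + greedyL r (greedyQ r i) := by
  simp only [greedyQ, if_pos h]

lemma two_mul_greedyL {r q : ℕ} (h : 2 ≤ r - q) :
    2 * greedyL r q = 2 ^ Nat.log 2 (r - q) := by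
  have hlog : 0 < Nat.log 2 (r - q) := Nat.log_pos (by norm_num) h
  rw [greedyL, ← pow_succ', Nat.sub_add_cancel hlog]

lemma Nat.sub_pow_log_two_lt_pow_log_two (n : ℕ) : n - 2 ^ Nat.log 2 n < 2 ^ Nat.log 2 n := by
  have := Nat.lt_pow_succ_log_self (by norm_num : 1 < 2) n
  rw [pow_succ] at this
  omega

lemma greedyL_add_two_mul_lt {r q : ℕ} (hq : q < r - 1) (h : q + 2 * greedyL r q < r - 1) :
    greedyL r (q + 2 * greedyL r q) < greedyL r q := by
  rw [two_mul_greedyL (by omega)] at h ⊢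
  rw [greedyL, greedyL,
    show r - (q + 2 ^ Nat.log 2 (r - q)) = r - q - 2 ^ Nat.log 2 (r - q) by omega]
  have hrest : 2 ≤ r - q - 2 ^ Nat.log 2 (r - q) := by omega
  generalize r - q = n at hrest ⊢
  have hlog_pos : 0 < Nat.log 2 (n - 2 ^ Nat.log 2 n) := Nat.log_pos (by norm_num) hrest
  have hlog_lt := Nat.log_lt_of_lt_pow (by omega) (Nat.sub_pow_log_two_lt_pow_log_two n)
  exact Nat.pow_lt_pow_right (by norm_num) (by omega)

theorem stmt14_general (r : ℕ) (i : ℕ)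
    (hi : greedyQ r i < r - 1) (hi1 : greedyQ r (i + 1) < r - 1)
    (heq : greedyL r (greedyQ r (i + 1)) = greedyL r (greedyQ r i)) :
    r - 1 ≤ greedyQ r (i + 2) ∨
      greedyL r (greedyQ r (i + 2)) < greedyL r (greedyQ r (i + 1)) := by
  have hq2 : greedyQ r (i + 2) = greedyQ r i + 2 * greedyL r (greedyQ r i) := by
    rw [greedyQ_succ_of_lt hi1, heq, greedyQ_succ_of_lt hi]
    ring
  rw [hq2, heq]
  by_cases hend : r - 1 ≤ greedyQ r i + 2 * greedyL r (greedyQ r i)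
  · exact Or.inl hend
  · exact Or.inr (greedyL_add_two_mul_lt hi (by omega))

theorem stmt14 (r : ℕ) (hr : 2 ≤ r) (i : ℕ)
    (hi : greedyQ r i < r - 1) (hi1 : greedyQ r (i + 1) < r - 1)
    (heq : greedyL r (greedyQ r (i + 1)) = greedyL r (greedyQ r i)) :
    r - 1 ≤ greedyQ r (i + 2) ∨
      greedyL r (greedyQ r (i + 2)) < greedyL r (greedyQ r (i + 1)) :=
  stmt14_general r i hi hi1 heq
end

section
/- Let r ≥ 2 be an integer and consider the greedy sequence q_0 = 0, L_i = 2^{⌊lg(r−q_i)⌋ − 1}, q_{i+1} = q_i + L_i (defined while q_i < r − 1). Then the sequence terminates: there is an N with q_N = r − 1 exactly (the sequence never passes r − 1); the half-open intervals [q_i, q_i + L_i) for 0 ≤ i < N form a partition of {0, 1, …, r − 2}; and N ≤ 2⌊lg r⌋. -/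
lemma greedyL_facts (r q : ℕ) (h : q < r - 1) :
    1 ≤ greedyL r q ∧ 2 * greedyL r q ≤ r - q := by
  have h2 : 2 ≤ r - q := by omega
  have he : 1 ≤ Nat.log 2 (r - q) := Nat.log_pos one_lt_two h2
  have hp : 2 ^ Nat.log 2 (r - q) ≤ r - q := Nat.pow_log_le_self 2 (by omega)
  refine ⟨Nat.one_le_two_pow, ?_⟩
  calc 2 * greedyL r q = 2 ^ (Nat.log 2 (r - q) - 1 + 1) := by
        rw [pow_succ, greedyL]; ring
    _ = 2 ^ Nat.log 2 (r - q) := by congr 1; omega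
    _ ≤ r - q := hp

lemma greedyQ_le (r : ℕ) (hr : 2 ≤ r) : ∀ i, greedyQ r i ≤ r - 1 := by
  intro i
  induction i with
  | zero => simp [greedyQ]
  | succ i ih =>
    rw [greedyQ]
    split
    · next h => obtain ⟨h1, h2⟩ := greedyL_facts r _ h; omega
    · exact ih

lemma greedyQ_mono (r : ℕ) : Monotone (greedyQ r) := by
  apply monotone_nat_of_le_succ
  intro i
  rw [greedyQ]
  split <;> omega

lemma greedyQ_const (r : ℕ) (i : ℕ) (h : greedyQ r i = r - 1) :
    ∀ j, i ≤ j → greedyQ r j = r - 1 := by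
  intro j hij
  induction j with
  | zero => have : i = 0 := by omega
            subst this; exact h
  | succ j ih =>
    rcases Nat.lt_or_ge i (j+1) with h' | h'
    · have hj := ih (by omega)
      rw [greedyQ, hj]; simp
    · have : i = j + 1 := by omega
      subst this; exact h

lemma greedyQ_two_step (r : ℕ) (hr : 2 ≤ r) (i k : ℕ)
    (hlog : Nat.log 2 (r - greedyQ r i) ≤ k + 1) :
    Nat.log 2 (r - greedyQ r (i + 2)) ≤ k := by
  have hle := greedyQ_le r hr
  rcases Nat.lt_or_ge (greedyQ r i) (r - 1) with h1 | h1
  swap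
  · have hq : greedyQ r i = r - 1 := le_antisymm (hle i) h1
    have hc := greedyQ_const r i hq (i + 2) (by omega)
    rw [hc, show r - (r - 1) = 1 by omega]
    simp
  · have hq1 : greedyQ r (i + 1) = greedyQ r i + greedyL r (greedyQ r i) := by
      rw [greedyQ, if_pos h1]
    rcases Nat.lt_or_ge (greedyQ r (i + 1)) (r - 1) with h2 | h2
    swap
    · have hq : greedyQ r (i + 1) = r - 1 := le_antisymm (hle (i+1)) h2
      have hc := greedyQ_const r (i+1) hq (i + 2) (by omega)
      rw [hc, show r - (r - 1) = 1 by omega]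
      simp
    · have hq2 : greedyQ r (i + 2) = greedyQ r (i + 1) + greedyL r (greedyQ r (i + 1)) := by
        rw [greedyQ, if_pos h2]
      obtain ⟨e, hee⟩ : ∃ e, Nat.log 2 (r - greedyQ r i) = e := ⟨_, rfl⟩
      obtain ⟨e', hee'⟩ : ∃ e', Nat.log 2 (r - greedyQ r (i + 1)) = e' := ⟨_, rfl⟩
      have he1 : 1 ≤ e := by rw [← hee]; exact Nat.log_pos one_lt_two (by omega)
      have he'1 : 1 ≤ e' := by rw [← hee']; exact Nat.log_pos one_lt_two (by omega)
      have hLe : greedyL r (greedyQ r i) = 2 ^ (e - 1) := by rw [greedyL, hee]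
      have hLe' : greedyL r (greedyQ r (i + 1)) = 2 ^ (e' - 1) := by rw [greedyL, hee']
      have hpe : 2 ^ e ≤ r - greedyQ r i := by
        rw [← hee]; exact Nat.pow_log_le_self 2 (by omega)
      have hpe' : r - greedyQ r i < 2 ^ (e + 1) := by
        have h := Nat.lt_pow_succ_log_self one_lt_two (r - greedyQ r i)
        rwa [hee] at h
      have he'le : e' ≤ e := by
        rw [← hee, ← hee']
        exact Nat.log_mono_right (by omega)
      have hlog' : e ≤ k + 1 := by rw [← hee]; exact hlog
      have key : r - greedyQ r (i + 2) < 2 ^ (k + 1) := by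
        rcases eq_or_lt_of_le he'le with heq | hltee
        · rw [heq] at hLe'
          have hstep : greedyQ r (i + 2) = greedyQ r i + 2 ^ (e - 1) + 2 ^ (e - 1) := by
            rw [hq2, hLe', hq1, hLe]
          have hsum : (2:ℕ) ^ (e - 1) + 2 ^ (e - 1) = 2 ^ e := by
            have h2 : (2:ℕ) ^ (e - 1) + 2 ^ (e - 1) = 2 ^ (e - 1 + 1) := by
              rw [pow_succ]; ring
            rw [h2]; congr 1; omega
          have hsplit : (2:ℕ) ^ (e + 1) = 2 ^ e + 2 ^ e := by rw [pow_succ]; ring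
          have hmono : (2:ℕ) ^ e ≤ 2 ^ (k + 1) :=
            Nat.pow_le_pow_right (by norm_num) (by omega)
          omega
        · have h1' : r - greedyQ r (i + 1) < 2 ^ (e' + 1) := by
            have h := Nat.lt_pow_succ_log_self one_lt_two (r - greedyQ r (i + 1))
            rwa [hee'] at h
          have hstep : greedyQ r (i + 2) = greedyQ r (i + 1) + 2 ^ (e' - 1) := by
            rw [hq2, hLe']
          have hmono : (2:ℕ) ^ (e' + 1) ≤ 2 ^ (k + 1) :=
            Nat.pow_le_pow_right (by norm_num) (by omega)
          omega
      have hle2 := hle (i + 2)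
      exact Nat.lt_succ_iff.mp (Nat.log_lt_of_lt_pow (by omega) key)

lemma greedyQ_reach (r : ℕ) (hr : 2 ≤ r) :
    ∀ k i, Nat.log 2 (r - greedyQ r i) ≤ k → greedyQ r (i + 2 * k) = r - 1 := by
  intro k
  induction k with
  | zero =>
    intro i h
    have hle := greedyQ_le r hr i
    have h1 : r - greedyQ r i < 2 := by
      by_contra hc
      have := Nat.log_pos one_lt_two (n := r - greedyQ r i) (by omega)
      omega
    simpa using (by omega : greedyQ r i = r - 1)
  | succ k ih =>
    intro i h
    have h2 := greedyQ_two_step r hr i k h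
    have h3 := ih (i + 2) h2
    have heq : i + 2 + 2 * k = i + 2 * (k + 1) := by ring
    rwa [heq] at h3

theorem stmt15 (r : ℕ) (hr : 2 ≤ r) :
    ∃ N : ℕ,
      greedyQ r N = r - 1 ∧
      (∀ i < N, greedyQ r i < r - 1) ∧
      (∀ i, greedyQ r i ≤ r - 1) ∧
      (∀ m < r - 1, ∃! i : ℕ, i < N ∧
        greedyQ r i ≤ m ∧ m < greedyQ r i + greedyL r (greedyQ r i)) ∧
      N ≤ 2 * Nat.log 2 r := by
  have hwit : greedyQ r (2 * Nat.log 2 r) = r - 1 := by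
    have h := greedyQ_reach r hr (Nat.log 2 r) 0 (by simp [greedyQ])
    simpa using h
  have hex : ∃ n, greedyQ r n = r - 1 := ⟨2 * Nat.log 2 r, hwit⟩
  set N := Nat.find hex with hN
  have hNspec : greedyQ r N = r - 1 := Nat.find_spec hex
  have hlt : ∀ i < N, greedyQ r i < r - 1 := by
    intro i hi
    have h1 := Nat.find_min hex hi
    have h2 := greedyQ_le r hr i
    omega
  refine ⟨N, hNspec, hlt, greedyQ_le r hr, ?_, Nat.find_min' hex hwit⟩
  intro m hm
  have hej : ∃ j, m < greedyQ r j := ⟨N, by omega⟩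
  set j := Nat.find hej with hj
  have hjspec : m < greedyQ r j := Nat.find_spec hej
  have hj1 : 1 ≤ j := by
    rcases Nat.eq_zero_or_pos j with h0 | h0
    · rw [h0] at hjspec; simp [greedyQ] at hjspec
    · exact h0
  set i := j - 1 with hi
  have hile : greedyQ r i ≤ m := by
    have := Nat.find_min hej (show i < j by omega)
    omega
  have hiN : i < N := by
    by_contra hc
    have := greedyQ_mono r (show N ≤ i by omega)
    omega
  have hqi : greedyQ r i < r - 1 := hlt i hiN
  have hsucc : greedyQ r (i + 1) = greedyQ r i + greedyL r (greedyQ r i) := by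
    rw [greedyQ, if_pos hqi]
  have hup : m < greedyQ r i + greedyL r (greedyQ r i) := by
    rw [← hsucc, show i + 1 = j by omega]
    exact hjspec
  refine ⟨i, ⟨hiN, hile, hup⟩, ?_⟩
  rintro y ⟨hyN, hyle, hyup⟩
  by_contra hne
  rcases Nat.lt_or_ge y i with hyi | hyi
  · have hqy : greedyQ r y < r - 1 := hlt y hyN
    have hsy : greedyQ r (y + 1) = greedyQ r y + greedyL r (greedyQ r y) := by
      rw [greedyQ, if_pos hqy]
    have := greedyQ_mono r (show y + 1 ≤ i by omega)
    omega
  · have hiy : i < y := by omega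
    have := greedyQ_mono r (show i + 1 ≤ y by omega)
    omega
end

section
/- Let n ≥ 1 be an integer and consider the TFT recursion tree on pairs (q, r) of nonnegative integers, defined as follows: the root is (0, 0); for a node (q, r), set len(q, r) = ⌈(n − q)/2^r⌉; a node with len(q, r) = 1 is a leaf, and a node with len(q, r) ≥ 2 has exactly two children, (q, r+1) and (q + 2^r, r+1). Then this tree is finite, it has exactly n leaves and exactly 2n − 1 nodes in total, and every node (q, r) with r ≥ 1 satisfies q < 2^r and 2^{r−1} < n. -/
/-- `len n q r = ⌈(n - q) / 2^r⌉`, the length of the subarray with offset `q` and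
stride `2^r` in an array of length `n`. -/
def len (n q r : ℕ) : ℕ := (n - q + 2 ^ r - 1) / 2 ^ r

/-- The nodes of the TFT recursion tree for size `n`: the root is `(0, 0)`, and a node
`(q, r)` with `len n q r ≥ 2` has the two children `(q, r+1)` and `(q + 2^r, r+1)`. -/
inductive IsNode (n : ℕ) : ℕ × ℕ → Prop where
  | root : IsNode n (0, 0)
  | even (q r : ℕ) : IsNode n (q, r) → 2 ≤ len n q r → IsNode n (q, r + 1)
  | odd (q r : ℕ) : IsNode n (q, r) → 2 ≤ len n q r → IsNode n (q + 2 ^ r, r + 1)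

/-! Offsets and depths are read in binary: `(q, r)` is a node iff `q < 2 ^ r` and every ancestor
`(q % 2 ^ k, k)`, `k < r`, is internal, i.e. `2 ^ k + q % 2 ^ k < n`. An internal node `(q, r)`
is then determined by `m = q + 2 ^ r ∈ [1, n)` (with `r = log₂ m`), and a leaf by its offset
`q ∈ [0, n)`, since no node has a descendant with the same offset once it is a leaf. This gives
`n` leaves and `n - 1` internal nodes. -/

lemma two_le_len_iff {n q r : ℕ} : 2 ≤ len n q r ↔ q + 2 ^ r < n := by
  have := Nat.two_pow_pos r
  rw [len, Nat.le_div_iff_mul_le this]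
  omega

lemma len_eq_one_iff {n q r : ℕ} : len n q r = 1 ↔ q < n ∧ n ≤ q + 2 ^ r := by
  have := Nat.two_pow_pos r
  have hleaf : len n q r = 1 ↔ 1 ≤ len n q r ∧ ¬2 ≤ len n q r := by omega
  rw [hleaf, two_le_len_iff, len, Nat.one_le_div_iff this]
  omega

lemma add_two_pow_mod_two_pow {q k r : ℕ} (hk : k ≤ r) : (q + 2 ^ r) % 2 ^ k = q % 2 ^ k := by
  obtain ⟨c, hc⟩ := pow_dvd_pow 2 hk
  rw [hc, Nat.add_mul_mod_self_left]

lemma log_two_add_two_pow {q r : ℕ} (hq : q < 2 ^ r) : Nat.log 2 (q + 2 ^ r) = r := by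
  rw [Nat.log_eq_iff (by simp), pow_succ]
  omega

lemma injOn_add_two_pow : Set.InjOn (fun p : ℕ × ℕ => p.1 + 2 ^ p.2) {p | p.1 < 2 ^ p.2} := by
  rintro ⟨q₁, r₁⟩ (h₁ : q₁ < 2 ^ r₁) ⟨q₂, r₂⟩ (h₂ : q₂ < 2 ^ r₂) (h : q₁ + 2 ^ r₁ = q₂ + 2 ^ r₂)
  have hr : r₁ = r₂ := by rw [← log_two_add_two_pow h₁, h, log_two_add_two_pow h₂]
  subst hr
  simp only [Prod.mk.injEq, and_true]
  omega

lemma isNode_iff {n : ℕ} {p : ℕ × ℕ} :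
    IsNode n p ↔ p.1 < 2 ^ p.2 ∧ ∀ k < p.2, 2 ^ k + p.1 % 2 ^ k < n := by
  constructor
  · intro h
    induction h with
    | root => simp
    | even q r _ hlen ih =>
      rw [two_le_len_iff] at hlen
      refine ⟨ih.1.trans (Nat.pow_lt_pow_succ one_lt_two), fun k hk => ?_⟩
      rcases Nat.lt_succ_iff_lt_or_eq.1 hk with hk | rfl
      · exact ih.2 k hk
      · rw [Nat.mod_eq_of_lt ih.1]
        omega
    | odd q r _ hlen ih =>
      obtain ⟨hq : q < 2 ^ r, hpath⟩ := ih
      rw [two_le_len_iff] at hlen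
      refine ⟨by rw [pow_succ]; omega, fun k hk => ?_⟩
      rw [add_two_pow_mod_two_pow (Nat.le_of_lt_succ hk)]
      rcases Nat.lt_succ_iff_lt_or_eq.1 hk with hk | rfl
      · exact hpath k hk
      · rw [Nat.mod_eq_of_lt hq]
        omega
  · obtain ⟨q, r⟩ := p
    induction r generalizing q with
    | zero =>
      rintro ⟨hq, -⟩
      obtain rfl : q = 0 := by simpa using hq
      exact IsNode.root
    | succ r ih =>
      rintro ⟨hq : q < 2 ^ (r + 1), hpath⟩
      have hparent : IsNode n (q % 2 ^ r, r) := by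
        refine ih _ ⟨Nat.mod_lt _ (Nat.two_pow_pos r), fun k hk => ?_⟩
        rw [Nat.mod_mod_of_dvd _ (pow_dvd_pow 2 hk.le)]
        exact hpath k (Nat.lt_succ_of_lt hk)
      have hlen : 2 ≤ len n (q % 2 ^ r) r := two_le_len_iff.2 (by linarith [hpath r r.lt_succ_self])
      have hdiv : q / 2 ^ r < 2 := Nat.div_lt_of_lt_mul (by rwa [pow_succ] at hq)
      have hsplit := Nat.mod_add_div q (2 ^ r)
      interval_cases hd : q / 2 ^ r
      · convert hparent.even _ _ hlen using 3
        omega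
      · convert hparent.odd _ _ hlen using 3
        omega

namespace IsNode

variable {n : ℕ}

lemma fst_lt (hn : 0 < n) {p : ℕ × ℕ} (h : IsNode n p) : p.1 < n := by
  induction h with
  | root => exact hn
  | even q r _ hlen => have := two_le_len_iff.1 hlen; dsimp only; omega
  | odd q r _ hlen => exact two_le_len_iff.1 hlen

lemma two_le_len_of_lt {q r r' : ℕ} (h : IsNode n (q, r)) (h' : IsNode n (q, r')) (hr : r < r') :
    2 ≤ len n q r := by
  have hpath := (isNode_iff.1 h').2 r hr
  rw [Nat.mod_eq_of_lt (isNode_iff.1 h).1] at hpath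
  exact two_le_len_iff.2 (by omega)

end IsNode

section Counting

variable {n : ℕ}

lemma injOn_fst_leaves : Set.InjOn Prod.fst {p : ℕ × ℕ | IsNode n p ∧ len n p.1 p.2 = 1} := by
  rintro ⟨q, r₁⟩ ⟨h₁, hleaf₁ : len n q r₁ = 1⟩ ⟨q', r₂⟩ ⟨h₂, hleaf₂ : len n q' r₂ = 1⟩
    (rfl : q = q')
  rcases lt_trichotomy r₁ r₂ with hr | rfl | hr
  · have := h₁.two_le_len_of_lt h₂ hr
    omega
  · rfl
  · have := h₂.two_le_len_of_lt h₁ hr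
    omega

/-- The leaf with offset `i` sits at the first depth `r` where `2 ^ r + i % 2 ^ r` reaches `n`. -/
lemma exists_leaf {i : ℕ} (hi : i < n) : ∃ r, IsNode n (i, r) ∧ len n i r = 1 := by
  have hex : ∃ r, n ≤ 2 ^ r + i % 2 ^ r := ⟨n, le_add_right n.lt_two_pow_self.le⟩
  set r := Nat.find hex
  have hspec : n ≤ 2 ^ r + i % 2 ^ r := Nat.find_spec hex
  have hir : i < 2 ^ r := by
    by_contra! h
    have hsplit := Nat.mod_add_div i (2 ^ r)
    have := Nat.le_mul_of_pos_right (2 ^ r) (Nat.div_pos h (Nat.two_pow_pos r))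
    omega
  refine ⟨r, isNode_iff.2 ⟨hir, fun k hk => not_le.1 (Nat.find_min hex hk)⟩,
    len_eq_one_iff.2 ⟨hi, ?_⟩⟩
  rw [Nat.mod_eq_of_lt hir] at hspec
  omega

lemma fst_image_leaves (hn : 0 < n) :
    Prod.fst '' {p : ℕ × ℕ | IsNode n p ∧ len n p.1 p.2 = 1} = Set.Iio n := by
  ext i
  constructor
  · rintro ⟨p, ⟨hp, -⟩, rfl⟩
    exact hp.fst_lt hn
  · intro hi
    obtain ⟨r, hleaf⟩ := exists_leaf hi
    exact ⟨(i, r), hleaf, rfl⟩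

lemma injOn_add_two_pow_internal :
    Set.InjOn (fun p : ℕ × ℕ => p.1 + 2 ^ p.2) {p : ℕ × ℕ | IsNode n p ∧ 2 ≤ len n p.1 p.2} :=
  injOn_add_two_pow.mono fun _ hp => (isNode_iff.1 hp.1).1

lemma add_two_pow_image_internal :
    (fun p : ℕ × ℕ => p.1 + 2 ^ p.2) '' {p : ℕ × ℕ | IsNode n p ∧ 2 ≤ len n p.1 p.2} =
      Set.Ico 1 n := by
  ext m
  constructor
  · rintro ⟨⟨q, r⟩, ⟨-, hlen⟩, rfl⟩
    exact ⟨Nat.le_add_left_of_le r.one_le_two_pow, two_le_len_iff.1 hlen⟩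
  · rintro ⟨hm, hmn⟩
    set r := Nat.log 2 m
    have hle : 2 ^ r ≤ m := Nat.pow_log_le_self 2 (by omega)
    have hlt : m < 2 ^ (r + 1) := Nat.lt_pow_succ_log_self one_lt_two m
    rw [pow_succ] at hlt
    refine ⟨(m - 2 ^ r, r), ⟨isNode_iff.2 ⟨by dsimp only; omega, fun k hk => ?_⟩,
      two_le_len_iff.2 (by dsimp only; omega)⟩, by dsimp only; omega⟩
    have hmod := Nat.mod_lt (m - 2 ^ r) (Nat.two_pow_pos k)
    have hk : 2 ^ (k + 1) ≤ 2 ^ r := Nat.pow_le_pow_right two_pos hk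
    rw [pow_succ] at hk
    dsimp only
    omega

lemma setOf_isNode_eq_leaves_union_internal (hn : 0 < n) :
    {p : ℕ × ℕ | IsNode n p} =
      {p : ℕ × ℕ | IsNode n p ∧ len n p.1 p.2 = 1} ∪
        {p : ℕ × ℕ | IsNode n p ∧ 2 ≤ len n p.1 p.2} := by
  ext ⟨q, r⟩
  simp only [Set.mem_union, Set.mem_ofPred_eq, len_eq_one_iff, two_le_len_iff]
  constructor
  · intro hp
    have := hp.fst_lt hn
    rcases lt_or_ge (q + 2 ^ r) n with h | h
    · exact Or.inr ⟨hp, h⟩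
    · exact Or.inl ⟨hp, this, h⟩
  · rintro (⟨hp, -⟩ | ⟨hp, -⟩) <;> exact hp

lemma disjoint_leaves_internal :
    Disjoint {p : ℕ × ℕ | IsNode n p ∧ len n p.1 p.2 = 1}
      {p : ℕ × ℕ | IsNode n p ∧ 2 ≤ len n p.1 p.2} :=
  Set.disjoint_left.2 fun _ h₁ h₂ => by have := h₁.2; have := h₂.2; omega

end Counting

theorem stmt16 (n : ℕ) (hn : 1 ≤ n) :
    {p : ℕ × ℕ | IsNode n p}.Finite ∧
    {p : ℕ × ℕ | IsNode n p ∧ len n p.1 p.2 = 1}.ncard = n ∧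
    {p : ℕ × ℕ | IsNode n p}.ncard = 2 * n - 1 ∧
    (∀ q r : ℕ, IsNode n (q, r) → 1 ≤ r → q < 2 ^ r ∧ 2 ^ (r - 1) < n) := by
  have hleaves := fst_image_leaves hn
  have hinternal := add_two_pow_image_internal (n := n)
  have hleaves_fin := Set.Finite.of_finite_image (hleaves ▸ Set.finite_Iio n) injOn_fst_leaves
  have hinternal_fin :=
    Set.Finite.of_finite_image (hinternal ▸ Set.finite_Ico 1 n) injOn_add_two_pow_internal
  have hleaves_card : {p : ℕ × ℕ | IsNode n p ∧ len n p.1 p.2 = 1}.ncard = n := by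
    rw [← injOn_fst_leaves.ncard_image, hleaves, Set.ncard_Iio_nat]
  rw [setOf_isNode_eq_leaves_union_internal hn]
  refine ⟨hleaves_fin.union hinternal_fin, hleaves_card, ?_, fun q r h hr => ?_⟩
  · rw [Set.ncard_union_eq disjoint_leaves_internal hleaves_fin hinternal_fin, hleaves_card,
      ← injOn_add_two_pow_internal.ncard_image, hinternal, Set.ncard_Ico_nat]
    omega
  · obtain ⟨hq, hpath⟩ := isNode_iff.1 h
    have := hpath (r - 1) (by dsimp only; omega)
    exact ⟨hq, by omega⟩
end
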